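/- arXiv:2507.16794 — 4 statements merged into one kernel-verified Lean document; each statement's English description precedes it below -/
import Mathlib

section
/- Let χ, n, χ₁, χ₂, n₁, n₂ be integers with χ₁, χ₂ ≥ 1, n₁, n₂ ≥ 0, χ₁ + χ₂ = χ, n₁ + n₂ = n, and such that 3χ - n, 3χ₁ - n₁, and 3χ₂ - n₂ are all non-negative even integers. Then there is a universal constant C > 0 such that ((3χ-n)/2)! / ( ((3χ₁-n₁)/2)! · ((3χ₂-n₂)/2)! ) ≤ C · χ · (3χ/2)^(3χ/2) / ( (3χ₁/2)^(3χ₁/2) · (3χ₂/2)^(3χ₂/2) ). -/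
/-!
With `aᵢ = (3χᵢ - nᵢ)/2`, the left side is the binomial coefficient `C(a₁ + a₂, a₁)`, which by
the binomial theorem is at most `B(a₁, a₂)` where `B(x, y) = (x + y)^(x + y) / (x^x y^y)`.
Since `B(x, y) = (1 + y/x)^x (1 + x/y)^y` and Bernoulli's inequality makes `(1 + y/x)^x`
increasing in `x`, `B` is monotone in each variable; as `aᵢ ≤ 3χᵢ/2` and `χ ≥ 1`, the bound
holds with `C = 1`.
-/

open Real

theorem one_add_div_rpow_self_le {x s t : ℝ} (hx : 0 ≤ x) (hs : 0 ≤ s) (hst : s ≤ t) :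
    (1 + x / s) ^ s ≤ (1 + x / t) ^ t := by
  rcases hs.eq_or_lt with rfl | hs
  · simpa using one_le_rpow (le_add_of_nonneg_right (div_nonneg hx hst)) hst
  have ht : 0 < t := hs.trans_le hst
  have hbern : 1 + x / s ≤ (1 + x / t) ^ (t / s) := by
    calc 1 + x / s = 1 + t / s * (x / t) := by field_simp
      _ ≤ (1 + x / t) ^ (t / s) :=
        one_add_mul_self_le_rpow_one_add (by linarith [div_nonneg hx ht.le])
          ((one_le_div hs).mpr hst)
  calc (1 + x / s) ^ s ≤ ((1 + x / t) ^ (t / s)) ^ s :=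
        rpow_le_rpow (by positivity) hbern hs.le
    _ = (1 + x / t) ^ t := by rw [← rpow_mul (by positivity), div_mul_cancel₀ _ hs.ne']

theorem rpow_self_pos {x : ℝ} (hx : 0 ≤ x) : 0 < x ^ x := by
  rcases hx.eq_or_lt with rfl | hx
  · simp
  · exact rpow_pos_of_pos hx x

noncomputable def binomBound (x y : ℝ) : ℝ := (x + y) ^ (x + y) / (x ^ x * y ^ y)

theorem binomBound_comm (x y : ℝ) : binomBound x y = binomBound y x := by
  rw [binomBound, binomBound, add_comm, mul_comm]

-- Also on the boundary, thanks to `0 ^ 0 = 1` and `y / 0 = 0`.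
theorem binomBound_eq {x y : ℝ} (hx : 0 ≤ x) (hy : 0 ≤ y) :
    binomBound x y = (1 + y / x) ^ x * (1 + x / y) ^ y := by
  rcases hx.eq_or_lt with rfl | hx
  · simp [binomBound, (rpow_self_pos hy).ne']
  rcases hy.eq_or_lt with rfl | hy
  · simp [binomBound, (rpow_self_pos hx.le).ne']
  have hxy : 0 < x + y := by positivity
  rw [binomBound, rpow_add hxy, one_add_div hx.ne', one_add_div hy.ne', add_comm y x,
    div_rpow hxy.le hx.le, div_rpow hxy.le hy.le]
  field_simp

theorem binomBound_le_binomBound_left {x x' y : ℝ} (hx : 0 ≤ x) (hxx' : x ≤ x') (hy : 0 ≤ y) :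
    binomBound x y ≤ binomBound x' y := by
  have hx' : 0 ≤ x' := hx.trans hxx'
  rw [binomBound_eq hx hy, binomBound_eq hx' hy]
  gcongr ?_ * ?_
  · exact one_add_div_rpow_self_le hy hx hxx'
  · exact rpow_le_rpow (by positivity) (by gcongr) hy

theorem binomBound_le_binomBound {x x' y y' : ℝ} (hx : 0 ≤ x) (hxx' : x ≤ x') (hy : 0 ≤ y)
    (hyy' : y ≤ y') : binomBound x y ≤ binomBound x' y' :=
  calc binomBound x y ≤ binomBound x' y := binomBound_le_binomBound_left hx hxx' hy
    _ = binomBound y x' := binomBound_comm _ _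
    _ ≤ binomBound y' x' := binomBound_le_binomBound_left hy hyy' (hx.trans hxx')
    _ = binomBound x' y' := binomBound_comm _ _

theorem pow_mul_pow_mul_choose_le_add_pow {R : Type*} [CommSemiring R] [PartialOrder R]
    [IsOrderedRing R] {x y : R} (hx : 0 ≤ x) (hy : 0 ≤ y) (m n : ℕ) :
    x ^ m * y ^ n * (m + n).choose m ≤ (x + y) ^ (m + n) := by
  rw [add_pow]
  have hm : m ∈ Finset.range (m + n + 1) := Finset.mem_range.mpr (by omega)
  simpa only [Nat.add_sub_cancel_left] using
    Finset.single_le_sum (f := fun k => x ^ k * y ^ (m + n - k) * ((m + n).choose k : R))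
      (fun k _ => by positivity) hm

theorem cast_choose_le_binomBound (m n : ℕ) : ((m + n).choose m : ℝ) ≤ binomBound m n := by
  have hpos : (0 : ℝ) < (m : ℝ) ^ (m : ℝ) * (n : ℝ) ^ (n : ℝ) :=
    mul_pos (rpow_self_pos m.cast_nonneg) (rpow_self_pos n.cast_nonneg)
  rw [binomBound, le_div_iff₀ hpos, ← Nat.cast_add]
  simp only [rpow_natCast]
  push_cast
  linarith [pow_mul_pow_mul_choose_le_add_pow m.cast_nonneg n.cast_nonneg (R := ℝ) m n]

/-- Lemma on factorial ratios: there is a universal constant `C > 0` such that whenever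
`χ₁ + χ₂ = χ`, `n₁ + n₂ = n` with `χ₁, χ₂ ≥ 1`, and `3χ - n`, `3χ₁ - n₁`, `3χ₂ - n₂` are
non-negative even integers, then
`((3χ-n)/2)! / (((3χ₁-n₁)/2)! ((3χ₂-n₂)/2)!) ≤ C χ (3χ/2)^(3χ/2) / ((3χ₁/2)^(3χ₁/2) (3χ₂/2)^(3χ₂/2))`. -/
theorem stmt2 :
    ∃ C : ℝ, 0 < C ∧ ∀ χ n χ₁ χ₂ n₁ n₂ : ℕ,
      1 ≤ χ₁ → 1 ≤ χ₂ → χ₁ + χ₂ = χ → n₁ + n₂ = n →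
      n ≤ 3 * χ → n₁ ≤ 3 * χ₁ → n₂ ≤ 3 * χ₂ →
      2 ∣ (3 * χ - n) → 2 ∣ (3 * χ₁ - n₁) → 2 ∣ (3 * χ₂ - n₂) →
      (((3 * χ - n) / 2).factorial : ℝ) /
          ((((3 * χ₁ - n₁) / 2).factorial : ℝ) * (((3 * χ₂ - n₂) / 2).factorial : ℝ)) ≤
        C * χ * ((3 * χ : ℝ) / 2) ^ ((3 * χ : ℝ) / 2) /
          (((3 * χ₁ : ℝ) / 2) ^ ((3 * χ₁ : ℝ) / 2) * ((3 * χ₂ : ℝ) / 2) ^ ((3 * χ₂ : ℝ) / 2)) := by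
  refine ⟨1, one_pos, fun χ n χ₁ χ₂ n₁ n₂ hχ₁ hχ₂ hχ hn _ hn₁ hn₂ _ hd₁ hd₂ => ?_⟩
  set a₁ := (3 * χ₁ - n₁) / 2
  set a₂ := (3 * χ₂ - n₂) / 2
  have ha : (3 * χ - n) / 2 = a₁ + a₂ := by omega
  have ha₁ : (a₁ : ℝ) ≤ 3 * χ₁ / 2 := by
    rw [le_div_iff₀ two_pos]
    exact_mod_cast (by omega : a₁ * 2 ≤ 3 * χ₁)
  have ha₂ : (a₂ : ℝ) ≤ 3 * χ₂ / 2 := by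
    rw [le_div_iff₀ two_pos]
    exact_mod_cast (by omega : a₂ * 2 ≤ 3 * χ₂)
  have hsplit : (3 * χ : ℝ) / 2 = 3 * χ₁ / 2 + 3 * χ₂ / 2 := by
    rw [← hχ]; push_cast; ring
  have hχ_ge : (1 : ℝ) ≤ χ := by exact_mod_cast (by omega : 1 ≤ χ)
  have hbound : (((a₁ + a₂).choose a₁ : ℕ) : ℝ) ≤ binomBound (3 * χ₁ / 2) (3 * χ₂ / 2) :=
    (cast_choose_le_binomBound a₁ a₂).trans
      (binomBound_le_binomBound a₁.cast_nonneg ha₁ a₂.cast_nonneg ha₂)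
  rw [ha, ← Nat.cast_add_choose, one_mul, mul_div_assoc, hsplit]
  exact hbound.trans (le_mul_of_one_le_left ((Nat.cast_nonneg _).trans hbound) hχ_ge)
end

section
/- For any finite connected graph G, the Cheeger constant h(G) = min over nonempty Ω ⊆ V(G) with |Ω| ≤ |V(G)|/2 of |∂Ω|/|Ω| is attained by some subset Ω such that both the induced subgraph on Ω and the induced subgraph on V(G)∖Ω are connected. -/
/-!
Start from any minimiser of the boundary ratio `|∂Ω| / |Ω|`. If `G[Ω]` is disconnected,
split `Ω` into two nonempty parts with no edges between them: boundary and size are both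
additive over such a split, so by the mediant inequality one part has ratio at most that of
`Ω`; iterating yields a connected minimiser `Ω`. The same argument applied to `Ωᶜ` gives a
component `K` of `G[Ωᶜ]` with ratio at most `|∂Ω| / |Ωᶜ| ≤ |∂Ω| / |Ω|`. `G[Kᶜ]` is connected,
since `Kᶜ` consists of `Ω` and the other components of `G[Ωᶜ]`, each of which `G` joins to `Ω`.
If `|K| ≤ |V| / 2` take `K`; otherwise take `Kᶜ`, which is at least as large as `Ω` and has
`|∂Kᶜ| = |∂K| ≤ |∂Ω|` because every boundary edge of `K` ends in `Ω`.
-/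

/-- Number of edges with exactly one endpoint in `s`. -/
noncomputable def ebdry {V : Type*} (G : SimpleGraph V) (s : Set V) : ℕ :=
  {p : V × V | p.1 ∈ s ∧ p.2 ∉ s ∧ G.Adj p.1 p.2}.ncard

open SimpleGraph

theorem div_le_add_div_add {α : Type*} [Field α] [LinearOrder α] [IsStrictOrderedRing α]
    {a b c d : α} (hc : 0 < c) (hd : 0 < d) (h : a / c ≤ b / d) :
    a / c ≤ (a + b) / (c + d) := by
  rw [div_le_div_iff₀ hc hd] at h
  rw [div_le_div_iff₀ hc (add_pos hc hd)]
  linarith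

namespace Cheeger

variable {V : Type*} {G : SimpleGraph V} {s A B K Ω : Set V}

noncomputable def boundaryRatio (G : SimpleGraph V) (s : Set V) : ℝ :=
  ebdry G s / s.ncard

-- For `K ⊆ s`: `K` is a union of connected components of `G.induce s`.
def AdjClosedIn (G : SimpleGraph V) (K s : Set V) : Prop :=
  ∀ x ∈ K, ∀ y ∈ s, G.Adj x y → y ∈ K

theorem ebdry_compl (s : Set V) : ebdry G sᶜ = ebdry G s := by
  have : {p : V × V | p.1 ∈ sᶜ ∧ p.2 ∉ sᶜ ∧ G.Adj p.1 p.2} =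
      Prod.swap '' {p : V × V | p.1 ∈ s ∧ p.2 ∉ s ∧ G.Adj p.1 p.2} := by
    rw [Set.image_swap_eq_preimage_swap]
    ext ⟨x, y⟩
    simp only [Set.mem_ofPred_eq, Set.mem_preimage, Prod.fst_swap, Prod.snd_swap,
      Set.mem_compl_iff, not_not, G.adj_comm x y]
    tauto
  rw [ebdry, this, Set.ncard_image_of_injective _ Prod.swap_injective, ebdry]

theorem exists_split_of_not_connected (hs : s.Nonempty) (hconn : ¬ (G.induce s).Connected) :
    ∃ A B, A.Nonempty ∧ B.Nonempty ∧ Disjoint A B ∧ A ∪ B = s ∧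
      ∀ a ∈ A, ∀ b ∈ B, ¬ G.Adj a b := by
  have : Nonempty s := hs.to_subtype
  obtain ⟨a, b, hab⟩ : ∃ a b : s, ¬ (G.induce s).Reachable a b := by
    simpa [connected_iff, Preconnected] using hconn
  let A : Set V := {w | ∃ hw : w ∈ s, (G.induce s).Reachable a ⟨w, hw⟩}
  have hAs : A ⊆ s := fun w hw => hw.1
  refine ⟨A, s \ A, ⟨a, a.2, .rfl⟩, ⟨b, b.2, fun hb => hab hb.2⟩,
    Set.disjoint_sdiff_right, Set.union_sdiff_cancel hAs, ?_⟩
  rintro x ⟨hxs, hx⟩ y ⟨hys, hy⟩ hxy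
  exact hy ⟨hys, hx.trans (Adj.reachable (G := G.induce s) hxy)⟩

theorem exists_mem_reachable_of_walk (hΩK : Ω ⊆ Kᶜ) (hK : AdjClosedIn G K Ωᶜ) {v u : V}
    (p : G.Walk v u) (hv : v ∉ K) (hu : u ∈ Ω) :
    ∃ w, ∃ hw : w ∈ Ω, (G.induce Kᶜ).Reachable ⟨v, hv⟩ ⟨w, hΩK hw⟩ := by
  induction p with
  | nil => exact ⟨_, hu, .rfl⟩
  | @cons v x u hvx p ih =>
    by_cases hvΩ : v ∈ Ω
    · exact ⟨v, hvΩ, .rfl⟩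
    have hx : x ∉ K := fun hxK => hv (hK x hxK v hvΩ hvx.symm)
    obtain ⟨w, hw, hxw⟩ := ih hx hu
    have hvx' : (G.induce Kᶜ).Adj ⟨v, hv⟩ ⟨x, hx⟩ := hvx
    exact ⟨w, hw, hvx'.reachable.trans hxw⟩

theorem connected_induce_compl_of_adjClosedIn (hG : G.Connected) (hΩ : (G.induce Ω).Connected)
    (hKΩ : K ⊆ Ωᶜ) (hK : AdjClosedIn G K Ωᶜ) : (G.induce Kᶜ).Connected := by
  have hΩK : Ω ⊆ Kᶜ := Set.subset_compl_comm.1 hKΩ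
  obtain ⟨o, ho⟩ := hΩ.nonempty
  rw [connected_iff_exists_forall_reachable]
  refine ⟨⟨o, hΩK ho⟩, fun ⟨v, hv⟩ => ?_⟩
  obtain ⟨w, hw, hvw⟩ := exists_mem_reachable_of_walk hΩK hK (hG v o).some hv ho
  have how : (G.induce Kᶜ).Reachable ⟨o, hΩK ho⟩ ⟨w, hΩK hw⟩ :=
    (hΩ.preconnected ⟨o, ho⟩ ⟨w, hw⟩).map (induceHomOfLE G hΩK).toHom
  exact how.trans hvw.symm

variable [Finite V]

theorem ebdry_union_of_forall_not_adj (hAB : Disjoint A B)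
    (hadj : ∀ a ∈ A, ∀ b ∈ B, ¬ G.Adj a b) :
    ebdry G (A ∪ B) = ebdry G A + ebdry G B := by
  have : {p : V × V | p.1 ∈ A ∪ B ∧ p.2 ∉ A ∪ B ∧ G.Adj p.1 p.2} =
      {p : V × V | p.1 ∈ A ∧ p.2 ∉ A ∧ G.Adj p.1 p.2} ∪
      {p : V × V | p.1 ∈ B ∧ p.2 ∉ B ∧ G.Adj p.1 p.2} := by
    ext ⟨x, y⟩
    have := hadj x; have := hadj y; have := G.adj_symm (u := x) (v := y)
    have := fun h : x ∈ A => Set.disjoint_left.1 hAB h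
    simp only [Set.mem_ofPred_eq, Set.mem_union]
    tauto
  rw [ebdry, this, Set.ncard_union_eq, ebdry, ebdry]
  exact Set.disjoint_left.2 fun p hA hB => Set.disjoint_left.1 hAB hA.1 hB.1

theorem ebdry_le_of_adjClosedIn (hKs : K ⊆ s) (hK : AdjClosedIn G K s) :
    ebdry G K ≤ ebdry G s :=
  Set.ncard_le_ncard fun _ ⟨hx, hy, hadj⟩ =>
    ⟨hKs hx, fun hys => hy (hK _ hx _ hys hadj), hadj⟩

theorem boundaryRatio_le_union (hAB : Disjoint A B) (hadj : ∀ a ∈ A, ∀ b ∈ B, ¬ G.Adj a b)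
    (hA : A.Nonempty) (hB : B.Nonempty) (h : boundaryRatio G A ≤ boundaryRatio G B) :
    boundaryRatio G A ≤ boundaryRatio G (A ∪ B) := by
  unfold boundaryRatio at *
  rw [ebdry_union_of_forall_not_adj hAB hadj, Set.ncard_union_eq hAB]
  push_cast
  exact div_le_add_div_add (by exact_mod_cast (Set.ncard_pos).2 hA)
    (by exact_mod_cast (Set.ncard_pos).2 hB) h

theorem exists_connected_adjClosedIn_boundaryRatio_le (G : SimpleGraph V) (hs : s.Nonempty) :
    ∃ K ⊆ s, K.Nonempty ∧ (G.induce K).Connected ∧ AdjClosedIn G K s ∧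
      boundaryRatio G K ≤ boundaryRatio G s := by
  induction hn : s.ncard using Nat.strong_induction_on generalizing s with
  | _ n ih =>
  by_cases hconn : (G.induce s).Connected
  · exact ⟨s, subset_rfl, hs, hconn, fun _ _ _ hy _ => hy, le_rfl⟩
  obtain ⟨A, B, hA, hB, hAB, rfl, hadj⟩ := exists_split_of_not_connected hs hconn
  clear hs hconn
  wlog hle : boundaryRatio G A ≤ boundaryRatio G B generalizing A B
  · rw [Set.union_comm] at *
    exact this B A hB hA hAB.symm (fun b hb a ha h => hadj a ha b hb h.symm) hn (le_of_not_ge hle)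
  have hAlt : A.ncard < n := hn ▸ Set.ncard_lt_ncard (Set.ssubset_union_left_iff.2 fun hBA =>
    Set.disjoint_left.1 hAB (hBA hB.some_mem) hB.some_mem)
  obtain ⟨K, hKA, hK, hKconn, hKcl, hKle⟩ := ih _ hAlt hA rfl
  refine ⟨K, hKA.trans Set.subset_union_left, hK, hKconn, ?_,
    hKle.trans (boundaryRatio_le_union hAB hadj hA hB hle)⟩
  rintro x hx y (hy | hy) hxy
  · exact hKcl x hx y hy hxy
  · exact absurd hxy (hadj x (hKA hx) y hy)

theorem exists_connected_minimizer (G : SimpleGraph V) (hV : 2 ≤ Nat.card V) :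
    ∃ Ω : Set V, Ω.Nonempty ∧ 2 * Ω.ncard ≤ Nat.card V ∧ (G.induce Ω).Connected ∧
      ∀ Ω' : Set V, Ω'.Nonempty → 2 * Ω'.ncard ≤ Nat.card V →
        boundaryRatio G Ω ≤ boundaryRatio G Ω' := by
  obtain ⟨v⟩ : Nonempty V := (Nat.card_pos_iff.1 (by omega)).1
  let Adm := {Ω : Set V // Ω.Nonempty ∧ 2 * Ω.ncard ≤ Nat.card V}
  have : Nonempty Adm :=
    ⟨⟨{v}, Set.singleton_nonempty v, by rw [Set.ncard_singleton]; omega⟩⟩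
  obtain ⟨⟨Ω, hΩ, hcard⟩, hmin⟩ := Finite.exists_min fun Ω : Adm => boundaryRatio G Ω
  obtain ⟨K, hKΩ, hK, hKconn, -, hle⟩ := exists_connected_adjClosedIn_boundaryRatio_le G hΩ
  exact ⟨K, hK, (Nat.mul_le_mul_left 2 (Set.ncard_le_ncard hKΩ)).trans hcard, hKconn,
    fun Ω' hΩ' h => hle.trans (hmin ⟨Ω', hΩ', h⟩)⟩

theorem exists_connected_compl_connected_boundaryRatio_le (hG : G.Connected) (hΩ : Ω.Nonempty)
    (hcard : 2 * Ω.ncard ≤ Nat.card V) (hΩconn : (G.induce Ω).Connected) :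
    ∃ C : Set V, C.Nonempty ∧ 2 * C.ncard ≤ Nat.card V ∧ (G.induce C).Connected ∧
      (G.induce Cᶜ).Connected ∧ boundaryRatio G C ≤ boundaryRatio G Ω := by
  have hΩc := Set.ncard_add_ncard_compl Ω
  have hΩpos := (Set.ncard_pos).2 hΩ
  obtain ⟨K, hKΩ, hK, hKconn, hKcl, hKle⟩ :=
    exists_connected_adjClosedIn_boundaryRatio_le G ((Set.ncard_pos).1 (by omega : 0 < Ωᶜ.ncard))
  have hKcconn := connected_induce_compl_of_adjClosedIn hG hΩconn hKΩ hKcl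
  by_cases hKcard : 2 * K.ncard ≤ Nat.card V
  · refine ⟨K, hK, hKcard, hKconn, hKcconn, hKle.trans ?_⟩
    rw [boundaryRatio, boundaryRatio, ebdry_compl]
    exact div_le_div_of_nonneg_left (by positivity) (by exact_mod_cast hΩpos)
      (by exact_mod_cast (by omega : Ω.ncard ≤ Ωᶜ.ncard))
  · have hKc := Set.ncard_add_ncard_compl K
    have hebdry : ebdry G K ≤ ebdry G Ω :=
      (ebdry_le_of_adjClosedIn hKΩ hKcl).trans_eq (ebdry_compl Ω)
    have hΩK : Ω ⊆ Kᶜ := Set.subset_compl_comm.1 hKΩ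
    refine ⟨Kᶜ, hΩ.mono hΩK, by omega, hKcconn, by rwa [compl_compl], ?_⟩
    rw [boundaryRatio, boundaryRatio, ebdry_compl]
    exact div_le_div₀ (by positivity) (by exact_mod_cast hebdry) (by exact_mod_cast hΩpos)
      (by exact_mod_cast Set.ncard_le_ncard hΩK)

end Cheeger

/-- The Cheeger constant of a finite connected graph is attained by a subset `Ω` such
that both `Ω` and its complement induce connected subgraphs. -/
theorem stmt10 {V : Type*} [Finite V] (G : SimpleGraph V) (hconn : G.Connected)
    (hV : 2 ≤ Nat.card V) :
    ∃ Ω : Set V, Ω.Nonempty ∧ 2 * Ω.ncard ≤ Nat.card V ∧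
      (G.induce Ω).Connected ∧ (G.induce Ωᶜ).Connected ∧
      ∀ Ω' : Set V, Ω'.Nonempty → 2 * Ω'.ncard ≤ Nat.card V →
        (ebdry G Ω : ℝ) / (Ω.ncard : ℝ) ≤ (ebdry G Ω' : ℝ) / (Ω'.ncard : ℝ) := by
  obtain ⟨Ω, hΩ, hcard, hΩconn, hmin⟩ := Cheeger.exists_connected_minimizer G hV
  obtain ⟨C, hC, hCcard, hCconn, hCcconn, hle⟩ :=
    Cheeger.exists_connected_compl_connected_boundaryRatio_le hconn hΩ hcard hΩconn
  exact ⟨C, hC, hCcard, hCconn, hCcconn, fun Ω' hΩ' h => hle.trans (hmin Ω' hΩ' h)⟩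
end

section
/- Let G be a finite connected graph with boundary δG (the vertices of degree 1). Then for every 0 ≤ i ≤ |δG| - 1, the i-th Steklov eigenvalue dominates the i-th Laplacian eigenvalue: σ_i(G) ≥ λ_i(G). -/
/-- Degree of a vertex, as the number of neighbours. -/
noncomputable def degN {V : Type*} (G : SimpleGraph V) (v : V) : ℕ := {w | G.Adj v w}.ncard

open Classical in
/-- The Dirichlet energy `Σ_{{x,y} ∈ E} (f x - f y)²` (each edge counted once). -/
noncomputable def quadForm {V : Type*} [Fintype V] (G : SimpleGraph V) (f : V → ℝ) : ℝ :=
  (1 / 2) * ∑ v : V, ∑ w : V, if G.Adj v w then (f v - f w) ^ 2 else 0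

/-- The degree-weighted square norm `Σ_v deg(v) f(v)²`. -/
noncomputable def lapNormSq {V : Type*} [Fintype V] (G : SimpleGraph V) (f : V → ℝ) : ℝ :=
  ∑ v : V, (degN G v : ℝ) * f v ^ 2

/-- The boundary square norm `Σ_{x ∈ δG} f(x)²`, where `δG` is the set of degree-1 vertices. -/
noncomputable def stekNormSq {V : Type*} [Fintype V] (G : SimpleGraph V) (f : V → ℝ) : ℝ :=
  ∑ v : V, if degN G v = 1 then f v ^ 2 else 0

/-- The `k`-th eigenvalue of the normalized Laplacian, via the Courant–Fischer
min-max characterization. -/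
noncomputable def lapEig {V : Type*} [Fintype V] (G : SimpleGraph V) (k : ℕ) : ℝ :=
  sInf {r : ℝ | ∃ W : Submodule ℝ (V → ℝ), Module.finrank ℝ W = k + 1 ∧
    ∀ f ∈ W, quadForm G f ≤ r * lapNormSq G f}

/-- The `k`-th Steklov eigenvalue of `(G, δG)`, via the min-max characterization. -/
noncomputable def stekEig {V : Type*} [Fintype V] (G : SimpleGraph V) (k : ℕ) : ℝ :=
  sInf {r : ℝ | ∃ W : Submodule ℝ (V → ℝ), Module.finrank ℝ W = k + 1 ∧
    ∀ f ∈ W, quadForm G f ≤ r * stekNormSq G f}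

/-! Both eigenvalues are infima of min-max sets for the same energy form, and the boundary norm
is dominated by the degree-weighted norm, so every nonnegative admissible Steklov bound is an
admissible Laplacian bound. Negative bounds are impossible: on a connected graph with a leaf,
the energy and the boundary norm vanish simultaneously only at `0`. Finally the Steklov set is
nonempty when `i + 1 ≤ |δG|`: on functions supported on `i + 1` leaves the two norms agree, and
the energy is always at most twice the degree-weighted norm. -/

section MinMax

variable {E : Type*} [AddCommGroup E] [Module ℝ E]

/-- `lapEig G k` and `stekEig G k` are, by definition, `sInf` of this set. -/
def minmaxSet (Q N : E → ℝ) (k : ℕ) : Set ℝ :=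
  {r | ∃ W : Submodule ℝ E, Module.finrank ℝ W = k + 1 ∧ ∀ f ∈ W, Q f ≤ r * N f}

lemma nonneg_of_mem_minmaxSet {Q N : E → ℝ} {k : ℕ} {r : ℝ} (hQ : ∀ f, 0 ≤ Q f)
    (hN : ∀ f, 0 ≤ N f) (hdef : ∀ f, Q f = 0 → N f = 0 → f = 0) (hr : r ∈ minmaxSet Q N k) :
    0 ≤ r := by
  obtain ⟨W, hW, hbound⟩ := hr
  have hWne : W ≠ ⊥ := by
    rintro rfl
    simp at hW
  obtain ⟨f, hfW, hf0⟩ := Submodule.exists_mem_ne_zero_of_ne_bot hWne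
  by_contra! hneg
  have hQf := hQ f
  have hNf := hN f
  have hle := hbound f hfW
  have hQ0 : Q f = 0 := by nlinarith
  have hN0 : N f = 0 := by nlinarith
  exact hf0 (hdef f hQ0 hN0)

lemma sInf_minmaxSet_le_of_le {Q N N' : E → ℝ} {k : ℕ} (hQ : ∀ f, 0 ≤ Q f)
    (hN' : ∀ f, 0 ≤ N' f) (hle : ∀ f, N' f ≤ N f) (hdef : ∀ f, Q f = 0 → N' f = 0 → f = 0)
    (hne : (minmaxSet Q N' k).Nonempty) :
    sInf (minmaxSet Q N k) ≤ sInf (minmaxSet Q N' k) := by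
  have hN : ∀ f, 0 ≤ N f := fun f => (hN' f).trans (hle f)
  have hdefN : ∀ f, Q f = 0 → N f = 0 → f = 0 := fun f hQf hNf =>
    hdef f hQf (le_antisymm (hNf ▸ hle f) (hN' f))
  refine csInf_le_csInf ⟨0, fun r hr => nonneg_of_mem_minmaxSet hQ hN hdefN hr⟩ hne ?_
  intro r hr
  have hr0 := nonneg_of_mem_minmaxSet hQ hN' hdef hr
  obtain ⟨W, hW, hbound⟩ := hr
  exact ⟨W, hW, fun f hf => (hbound f hf).trans (mul_le_mul_of_nonneg_left (hle f) hr0)⟩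

end MinMax

lemma exists_submodule_finrank_eq_card_vanishing_off {K V : Type*} [Field K] (S : Finset V) :
    ∃ W : Submodule K (V → K), Module.finrank K W = S.card ∧ ∀ f ∈ W, ∀ v ∉ S, f v = 0 := by
  let ext := Function.ExtendByZero.linearMap K (Subtype.val : S → V)
  refine ⟨LinearMap.range ext, ?_, ?_⟩
  · rw [LinearMap.finrank_range_of_inj
        (Function.extend_injective Subtype.val_injective (0 : V → K)),
      Module.finrank_fintype_fun_eq_card, Fintype.card_coe]
  · rintro _ ⟨g, rfl⟩ v hv
    exact Function.extend_apply' _ _ _ (by simpa using hv)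

namespace SimpleGraph

open Finset

variable {V : Type*} [Fintype V] (G : SimpleGraph V)

open Classical in
lemma degN_eq_degree (v : V) : degN G v = G.degree v := by
  rw [degN, ← card_neighborSet_eq_degree, ← Nat.card_eq_fintype_card, Nat.card_coe_set_eq]
  rfl

open Classical in
lemma lapNormSq_eq_sum_adj (f : V → ℝ) :
    lapNormSq G f = ∑ v, ∑ w, if G.Adj v w then f v ^ 2 else 0 := by
  simp_rw [lapNormSq, degN_eq_degree, degree_eq_sum_if_adj (R := ℝ), sum_mul, ite_mul, one_mul,
    zero_mul]

open Classical in
lemma quadForm_le_two_mul_lapNormSq (f : V → ℝ) : quadForm G f ≤ 2 * lapNormSq G f := by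
  have hswap : lapNormSq G f = ∑ v, ∑ w, if G.Adj v w then f w ^ 2 else 0 := by
    rw [lapNormSq_eq_sum_adj, sum_comm]
    simp_rw [G.adj_comm]
  calc quadForm G f
      ≤ (1 / 2) * ∑ v, ∑ w, if G.Adj v w then 2 * f v ^ 2 + 2 * f w ^ 2 else 0 := by
        unfold quadForm
        gcongr with v _ w _
        split_ifs
        · nlinarith [sq_nonneg (f v + f w)]
        · rfl
    _ = 2 * lapNormSq G f := by
        have hsplit : ∀ v w, (if G.Adj v w then 2 * f v ^ 2 + 2 * f w ^ 2 else 0) =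
            2 * (if G.Adj v w then f v ^ 2 else 0) + 2 * (if G.Adj v w then f w ^ 2 else 0) := by
          intro v w
          split_ifs <;> ring
        simp_rw [hsplit, sum_add_distrib, ← mul_sum, ← hswap, ← lapNormSq_eq_sum_adj]
        ring

open Classical in
lemma quadForm_eq_toLinearMap₂' (f : V → ℝ) :
    quadForm G f = Matrix.toLinearMap₂' ℝ (G.lapMatrix ℝ) f f := by
  rw [lapMatrix_toLinearMap₂', quadForm]
  ring

lemma quadForm_nonneg (f : V → ℝ) : 0 ≤ quadForm G f := by
  unfold quadForm
  positivity

lemma stekNormSq_nonneg (f : V → ℝ) : 0 ≤ stekNormSq G f := by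
  unfold stekNormSq
  positivity

lemma stekNormSq_le_lapNormSq (f : V → ℝ) : stekNormSq G f ≤ lapNormSq G f := by
  refine sum_le_sum fun v _ => ?_
  split_ifs with h
  · simp [h]
  · positivity

lemma eq_zero_of_quadForm_eq_zero_of_stekNormSq_eq_zero (hconn : G.Connected) {u : V}
    (hu : degN G u = 1) {f : V → ℝ} (hQ : quadForm G f = 0) (hS : stekNormSq G f = 0) :
    f = 0 := by
  classical
  have hconst := (lapMatrix_toLinearMap₂'_apply'_eq_zero_iff_forall_reachable G f).1
    (quadForm_eq_toLinearMap₂' G f ▸ hQ)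
  have hfu : f u = 0 := by
    have := (sum_eq_zero_iff_of_nonneg fun v _ => by positivity).1 hS u (mem_univ u)
    simpa [hu] using this
  funext v
  rw [hconst v u (hconn.preconnected v u), hfu, Pi.zero_apply]

lemma lapNormSq_eq_stekNormSq {f : V → ℝ} (hf : ∀ v, degN G v ≠ 1 → f v = 0) :
    lapNormSq G f = stekNormSq G f := by
  refine sum_congr rfl fun v _ => ?_
  by_cases h : degN G v = 1
  · simp [h]
  · simp [h, hf v h]

lemma two_mem_minmaxSet_stekNormSq {k : ℕ} (hk : k + 1 ≤ {v | degN G v = 1}.ncard) :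
    2 ∈ minmaxSet (quadForm G) (stekNormSq G) k := by
  classical
  rw [Set.ncard_eq_toFinset_card', Set.toFinset_ofPred] at hk
  obtain ⟨S, hSδ, hS⟩ := exists_subset_card_eq hk
  obtain ⟨W, hW, hvanish⟩ := exists_submodule_finrank_eq_card_vanishing_off (K := ℝ) S
  refine ⟨W, hS ▸ hW, fun f hf => ?_⟩
  have hleaf : ∀ v, degN G v ≠ 1 → f v = 0 := fun v hv =>
    hvanish f hf v fun hvS => hv (by simpa using hSδ hvS)
  rw [← G.lapNormSq_eq_stekNormSq hleaf]
  exact G.quadForm_le_two_mul_lapNormSq f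

end SimpleGraph

/-- For a finite connected graph with boundary `δG`, the Steklov eigenvalues dominate
the Laplacian eigenvalues: `σ_i(G) ≥ λ_i(G)` for `0 ≤ i ≤ |δG| - 1`. -/
theorem stmt12 {V : Type*} [Fintype V] (G : SimpleGraph V) (hconn : G.Connected)
    (hδ : 1 ≤ {v | degN G v = 1}.ncard) :
    ∀ i : ℕ, i ≤ {v | degN G v = 1}.ncard - 1 → lapEig G i ≤ stekEig G i := by
  intro i hi
  obtain ⟨u, hu⟩ : {v | degN G v = 1}.Nonempty := (Set.ncard_pos (Set.toFinite _)).1 hδ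
  exact sInf_minmaxSet_le_of_le G.quadForm_nonneg G.stekNormSq_nonneg G.stekNormSq_le_lapNormSq
    (fun _ => G.eq_zero_of_quadForm_eq_zero_of_stekNormSq_eq_zero hconn hu)
    ⟨2, G.two_mem_minmaxSet_stekNormSq (by omega)⟩
end

section
/- Fix k ≥ 1. Let T_k be the tree with vertices v₀, ..., v_k, w₁, ..., w_{k-1} and edges v_i ∼ v_{i+1} for 0 ≤ i ≤ k-1 and v_i ∼ w_i for 1 ≤ i ≤ k-1. Let G be a finite connected 3-regular graph, and let G_k be obtained from G by replacing each edge u₁∼u₂ by a fresh copy of T_k together with two new edges v₀∼u₁ and v₀∼u₂. Then the Cheeger constant satisfies h(G_k) ≥ min{ 1/(2k), h(G)/(3k + 1 + k·h(G)) }. -/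
/-- The Cheeger constant `h(G) = inf |∂Ω|/|Ω|` over nonempty `Ω` with `|Ω| ≤ |V|/2`. -/
noncomputable def cheeger {V : Type*} (G : SimpleGraph V) : ℝ :=
  sInf {r : ℝ | ∃ s : Set V, s.Nonempty ∧ 2 * s.ncard ≤ Nat.card V ∧
    r = (ebdry G s : ℝ) / (s.ncard : ℝ)}

/-- Adjacency in the tree `T_k`: vertices `0,…,k` are the path `v₀,…,v_k`, and vertex
`k + i` (for `1 ≤ i ≤ k-1`) is the pendant `w_i` attached to `v_i`. -/
def treeAdj (k : ℕ) (a b : ℕ) : Prop :=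
  (b = a + 1 ∧ b ≤ k) ∨ (a = b + 1 ∧ a ≤ k) ∨
  (1 ≤ a ∧ a ≤ k - 1 ∧ b = k + a) ∨ (1 ≤ b ∧ b ≤ k - 1 ∧ a = k + b)

/-- The tree-planting construction `G_k`: every edge `u₁ ∼ u₂` of `G` is replaced by a
fresh copy of `T_k` together with the two new edges `v₀ ∼ u₁` and `v₀ ∼ u₂`. -/
def plant {V : Type*} (G : SimpleGraph V) (k : ℕ) :
    SimpleGraph (V ⊕ (G.edgeSet × Fin (2 * k))) where
  Adj x y :=
    match x, y with
    | Sum.inl _, Sum.inl _ => False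
    | Sum.inl u, Sum.inr (e, j) => (j : ℕ) = 0 ∧ u ∈ (e : Sym2 V)
    | Sum.inr (e, j), Sum.inl u => (j : ℕ) = 0 ∧ u ∈ (e : Sym2 V)
    | Sum.inr (e, j), Sum.inr (e', j') => e = e' ∧ treeAdj k (j : ℕ) (j' : ℕ)
  symm := by
    constructor
    rintro (u | ⟨e, j⟩) (u' | ⟨e', j'⟩) h <;> simp_all [treeAdj] <;> tauto
  loopless := by
    constructor
    rintro (u | ⟨e, j⟩) h <;> simp_all [treeAdj] <;> omega

/-!
Write `A = Ω ∩ V` and, for an edge `e` of `G`, let `s_e` count the vertices of `Ω` in the tree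
planted on `e`, `t_e ∈ {0, 1, 2}` the endpoints of `e` in `A`, and `d_e` the boundary edges of `Ω`
meeting that tree. The tree together with the two endpoints of `e` is connected, so `d_e = 0`
forces `s_e ≤ k t_e` and `t_e ≠ 1`. Hence every edge is good, `s_e ≤ k (t_e + d_e)`, or bad,
`s_e ≤ 2k d_e`, and every edge of `∂_G A` is good with `d_e ≥ 1`. If `b` and `c` are the boundary
edges at bad and good trees, the bad trees hold at most `2k b` vertices of `Ω`, the good ones at
most `3k |A| + k c` by 3-regularity, and `h(G) |A| ≤ |∂_G A| ≤ c` as long as `|A| ≤ |V| / 2`;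
weighing `b` against `c` gives the bound. If `|A| > |V| / 2`, the complement of `Ω` has the same
boundary and a small trace on `V`.
-/

open Finset

section Cheeger

variable {W : Type*} (H : SimpleGraph W)

lemma ebdry_compl (s : Set W) : ebdry H sᶜ = ebdry H s := by
  have : {p : W × W | p.1 ∈ sᶜ ∧ p.2 ∉ sᶜ ∧ H.Adj p.1 p.2}
      = Prod.swap '' {p : W × W | p.1 ∈ s ∧ p.2 ∉ s ∧ H.Adj p.1 p.2} := by
    ext ⟨x, y⟩
    simp only [Set.image_swap_eq_preimage_swap, Set.mem_preimage, Prod.swap_prod_mk,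
      Set.mem_ofPred_eq, Set.mem_compl_iff, not_not, H.adj_comm x y]
    tauto
  rw [ebdry, ebdry, this, Set.ncard_image_of_injective _ Prod.swap_injective]

lemma cheeger_nonneg : 0 ≤ cheeger H :=
  Real.sInf_nonneg (by rintro _ ⟨s, -, -, rfl⟩; positivity)

lemma cheeger_mul_ncard_le {s : Set W} (hs : 2 * s.ncard ≤ Nat.card W) :
    cheeger H * s.ncard ≤ ebdry H s := by
  rcases Nat.eq_zero_or_pos s.ncard with h0 | hpos
  · simp [h0]
  have hbdd : BddBelow {r : ℝ | ∃ s : Set W, s.Nonempty ∧ 2 * s.ncard ≤ Nat.card W ∧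
      r = (ebdry H s : ℝ) / (s.ncard : ℝ)} :=
    ⟨0, by rintro _ ⟨s, -, -, rfl⟩; positivity⟩
  have hmem := csInf_le hbdd ⟨s, Set.nonempty_of_ncard_ne_zero hpos.ne', hs, rfl⟩
  rwa [← cheeger, le_div_iff₀ (by exact_mod_cast hpos)] at hmem

/-- No set is admissible, so this is the junk value `sInf ∅ = 0`. -/
lemma cheeger_eq_zero_of_card_le_one [Finite W] (hW : Nat.card W ≤ 1) : cheeger H = 0 := by
  rw [cheeger, ← Real.sInf_empty]
  congr 1
  refine Set.eq_empty_of_forall_notMem ?_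
  rintro _ ⟨s, hs, hs2, -⟩
  have := (Set.ncard_pos s.toFinite).mpr hs
  omega

lemma le_cheeger [Finite W] (hW : 2 ≤ Nat.card W) {m : ℝ}
    (hm : ∀ s : Set W, 2 * s.ncard ≤ Nat.card W → m * s.ncard ≤ ebdry H s) :
    m ≤ cheeger H := by
  obtain ⟨w⟩ : Nonempty W := Nat.card_pos_iff.mp (by omega) |>.1
  refine le_csInf ⟨_, {w}, Set.singleton_nonempty w, by rw [Set.ncard_singleton]; omega, rfl⟩ ?_
  rintro _ ⟨s, hs, hs2, rfl⟩
  rw [le_div_iff₀ (by exact_mod_cast (Set.ncard_pos s.toFinite).mpr hs)]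
  exact hm s hs2

end Cheeger

lemma min_mul_add_le {k h a P Q b c : ℝ} (hk : 0 < k) (hh : 0 ≤ h) (ha : 0 ≤ a) (hP₀ : 0 ≤ P)
    (hQ₀ : 0 ≤ Q) (hP : P ≤ 2 * k * b) (hQ : Q ≤ 3 * k * a + k * c) (hac : h * a ≤ c) :
    min (1 / (2 * k)) (h / (3 * k + 1 + k * h)) * (a + P + Q) ≤ b + c := by
  have hD : 0 < 3 * k + 1 + k * h := by positivity
  have hPb : 1 / (2 * k) * P ≤ b := by
    rw [div_mul_eq_mul_div, one_mul, div_le_iff₀ (by positivity)]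
    linarith
  have hQc : h / (3 * k + 1 + k * h) * (a + Q) ≤ c := by
    rw [div_mul_eq_mul_div, div_le_iff₀ hD]
    nlinarith [mul_le_mul_of_nonneg_left hQ hh, mul_le_mul_of_nonneg_left hac hk.le]
  calc min (1 / (2 * k)) (h / (3 * k + 1 + k * h)) * (a + P + Q)
      = min (1 / (2 * k)) (h / (3 * k + 1 + k * h)) * P
        + min (1 / (2 * k)) (h / (3 * k + 1 + k * h)) * (a + Q) := by ring
    _ ≤ 1 / (2 * k) * P + h / (3 * k + 1 + k * h) * (a + Q) := by
      gcongr
      exacts [min_le_left _ _, min_le_right _ _]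
    _ ≤ b + c := add_le_add hPb hQc

lemma exists_treeAdj_lt {k j : ℕ} (hj0 : 0 < j) (hj : j < 2 * k) : ∃ i < j, treeAdj k i j := by
  by_cases hjk : j ≤ k
  · exact ⟨j - 1, by omega, Or.inl ⟨by omega, hjk⟩⟩
  · exact ⟨j - k, by omega, Or.inr (Or.inr (Or.inl ⟨by omega, by omega, by omega⟩))⟩

/-- `T_k` is connected. -/
lemma treeAdj_iff_of_forall {k : ℕ} {Q : Fin (2 * k) → Prop}
    (hQ : ∀ i j : Fin (2 * k), treeAdj k i j → (Q i ↔ Q j)) (i j : Fin (2 * k)) : Q i ↔ Q j := by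
  have hroot : ∀ n (hn : n < 2 * k), Q ⟨n, hn⟩ ↔ Q ⟨0, by omega⟩ := by
    intro n
    induction n using Nat.strong_induction_on with
    | _ n ih =>
      intro hn
      rcases Nat.eq_zero_or_pos n with rfl | hn0
      · rfl
      obtain ⟨i, hin, hadj⟩ := exists_treeAdj_lt hn0 hn
      exact (hQ ⟨i, by omega⟩ ⟨n, hn⟩ hadj).symm.trans (ih i hin (by omega))
  exact (hroot i i.2).trans (hroot j j.2).symm

noncomputable section Plant

open scoped Classical

def boundaryPairs {W : Type*} [Fintype W] (H : SimpleGraph W) (s : Set W) : Finset (W × W) :=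
  {p | p.1 ∈ s ∧ p.2 ∉ s ∧ H.Adj p.1 p.2}

lemma ebdry_eq_card_boundaryPairs {W : Type*} [Fintype W] (H : SimpleGraph W) (s : Set W) :
    ebdry H s = #(boundaryPairs H s) := by
  rw [ebdry, boundaryPairs, ← Set.ncard_coe_finset, coe_filter_univ]

variable {V : Type*} [Fintype V]

lemma degN_eq_degree (G : SimpleGraph V) (v : V) : degN G v = G.degree v := by
  rw [degN, ← SimpleGraph.card_neighborFinset_eq_degree, ← Set.ncard_coe_finset,
    SimpleGraph.coe_neighborFinset]
  rfl

lemma card_edge_mem_eq_degree (G : SimpleGraph V) (v : V) :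
    #{e : G.edgeSet | v ∈ (e : Sym2 V)} = G.degree v := by
  rw [← G.card_incidenceFinset_eq_degree]
  refine card_nbij (↑) (fun e he => ?_) Subtype.val_injective.injOn (fun e he => ?_)
  · simp only [coe_filter, mem_univ, true_and, Set.mem_ofPred_eq] at he
    exact (G.mem_incidenceFinset v e).mpr ⟨e.2, he⟩
  · obtain ⟨he, hv⟩ := (G.mem_incidenceFinset v e).mp he
    exact ⟨⟨e, he⟩, by simpa using hv, rfl⟩

variable {G : SimpleGraph V} {k : ℕ} (Ω : Set (V ⊕ (G.edgeSet × Fin (2 * k))))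

def treeOf : V ⊕ (G.edgeSet × Fin (2 * k)) → Option G.edgeSet :=
  Sum.elim (fun _ => none) (fun x => some x.1)

/-- The boundary pairs of `Ω` with an endpoint in the copy of `T_k` planted on `e`. -/
def treeBoundary (e : G.edgeSet) :
    Finset ((V ⊕ (G.edgeSet × Fin (2 * k))) × (V ⊕ (G.edgeSet × Fin (2 * k)))) :=
  {p ∈ boundaryPairs (plant G k) Ω | (treeOf p.1).or (treeOf p.2) = some e}

def treeCount (e : G.edgeSet) : ℕ := #{j : Fin (2 * k) | Sum.inr (e, j) ∈ Ω}

def baseFinset : Finset V := {v | Sum.inl v ∈ Ω}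

def endCount (e : G.edgeSet) : ℕ := #{v ∈ baseFinset Ω | v ∈ (e : Sym2 V)}

lemma ncard_eq_card_baseFinset_add_sum_treeCount :
    Ω.ncard = #(baseFinset Ω) + ∑ e, treeCount Ω e := by
  have hΩ : Ω.ncard = #{w | w ∈ Ω} := by
    rw [← Set.ncard_coe_finset, coe_filter_univ, Set.ofPred_mem_eq]
  simp only [hΩ, baseFinset, treeCount, card_filter, Fintype.sum_sum_type, Fintype.sum_prod_type]

lemma ncard_preimage_inl : (Sum.inl ⁻¹' Ω).ncard = #(baseFinset Ω) := by
  rw [← Set.ncard_coe_finset, baseFinset, coe_filter_univ]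
  rfl

lemma sum_card_treeBoundary_le : ∑ e, #(treeBoundary Ω e) ≤ ebdry (plant G k) Ω := by
  rw [ebdry_eq_card_boundaryPairs, card_eq_sum_card_fiberwise
    (f := fun p => (treeOf p.1).or (treeOf p.2)) (t := univ) (fun _ _ => mem_univ _),
    Fintype.sum_option]
  exact le_add_self

lemma sum_endCount : ∑ e, endCount Ω e = ∑ v ∈ baseFinset Ω, G.degree v := by
  simp_rw [← card_edge_mem_eq_degree]
  exact sum_card_bipartiteAbove_eq_sum_card_bipartiteBelow
    (r := fun (e : G.edgeSet) v => v ∈ (e : Sym2 V))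

lemma ebdry_preimage_inl_le : ebdry G (Sum.inl ⁻¹' Ω) ≤ #{e | endCount Ω e = 1} := by
  rw [ebdry_eq_card_boundaryPairs, ← card_image_of_injective _ Subtype.val_injective]
  refine card_le_card_of_injOn (fun p => s(p.1, p.2)) (fun p hp => ?_) (fun p hp q hq hpq => ?_)
  · obtain ⟨hx, hy, hxy⟩ : Sum.inl p.1 ∈ Ω ∧ Sum.inl p.2 ∉ Ω ∧ G.Adj p.1 p.2 := by
      simpa [boundaryPairs] using hp
    refine mem_image.mpr ⟨⟨s(p.1, p.2), hxy⟩, ?_, rfl⟩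
    rw [mem_filter, endCount, card_eq_one]
    refine ⟨mem_univ _, p.1, ?_⟩
    ext v
    simp only [baseFinset, mem_filter, mem_univ, true_and, Sym2.mem_iff, mem_singleton]
    constructor
    · rintro ⟨hv, rfl | rfl⟩
      · rfl
      · exact absurd hv hy
    · rintro rfl
      exact ⟨hx, Or.inl rfl⟩
  · simp only [boundaryPairs, coe_filter, mem_univ, true_and, Set.mem_ofPred_eq,
      Set.mem_preimage] at hp hq
    rcases Sym2.eq_iff.mp hpq with ⟨h₁, h₂⟩ | ⟨h₁, -⟩
    · exact Prod.ext h₁ h₂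
    · exact absurd (h₁ ▸ hp.1) hq.2.1

variable {Ω}

lemma iff_of_card_treeBoundary_eq_zero {e : G.edgeSet} (h : #(treeBoundary Ω e) = 0)
    {x y : V ⊕ (G.edgeSet × Fin (2 * k))} (hxy : (plant G k).Adj x y) (hx : treeOf x = some e) :
    x ∈ Ω ↔ y ∈ Ω := by
  have hy : (treeOf y).or (treeOf x) = some e := by
    rcases x with u | ⟨e₁, i⟩ <;> rcases y with u' | ⟨e₂, j⟩
    · cases hx
    · cases hx
    · exact hx
    · obtain ⟨rfl, -⟩ := hxy
      exact hx
  have hmem : ∀ p, p.1 ∈ Ω → p.2 ∉ Ω → (plant G k).Adj p.1 p.2 →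
      (treeOf p.1).or (treeOf p.2) = some e → p ∈ treeBoundary Ω e := fun p h₁ h₂ h₃ h₄ => by
    simp only [treeBoundary, boundaryPairs, mem_filter, mem_univ, true_and]
    exact ⟨⟨h₁, h₂, h₃⟩, h₄⟩
  rw [card_eq_zero, eq_empty_iff_forall_notMem] at h
  constructor
  · exact fun hxΩ => by_contra fun hyΩ => h (x, y) (hmem _ hxΩ hyΩ hxy (by simp [hx]))
  · exact fun hyΩ => by_contra fun hxΩ => h (y, x) (hmem _ hyΩ hxΩ hxy.symm hy)

lemma mem_iff_of_card_treeBoundary_eq_zero {e : G.edgeSet} (h : #(treeBoundary Ω e) = 0)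
    {u : V} (hu : u ∈ (e : Sym2 V)) (j : Fin (2 * k)) : Sum.inr (e, j) ∈ Ω ↔ Sum.inl u ∈ Ω := by
  let root : Fin (2 * k) := ⟨0, j.pos⟩
  have hroot : Sum.inr (e, root) ∈ Ω ↔ Sum.inl u ∈ Ω :=
    iff_of_card_treeBoundary_eq_zero h (y := Sum.inl u) ⟨rfl, hu⟩ rfl
  refine (treeAdj_iff_of_forall (Q := fun j => Sum.inr (e, j) ∈ Ω) ?_ j root).trans hroot
  exact fun i j hij => iff_of_card_treeBoundary_eq_zero h ⟨rfl, hij⟩ rfl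

omit [Fintype V] in
variable (Ω) in
lemma treeCount_le (e : G.edgeSet) : treeCount Ω e ≤ 2 * k :=
  (card_filter_le _ _).trans_eq (card_fin _)

lemma treeCount_le_and_endCount_ne_one (hk : 1 ≤ k) {e : G.edgeSet}
    (h : #(treeBoundary Ω e) = 0) : treeCount Ω e ≤ k * endCount Ω e ∧ endCount Ω e ≠ 1 := by
  obtain ⟨e, he⟩ := e
  induction e using Sym2.ind with | _ u₁ u₂ => ?_
  have hne : u₁ ≠ u₂ := (G.mem_edgeSet.mp he).ne
  let root : Fin (2 * k) := ⟨0, by omega⟩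
  have h₁ := mem_iff_of_card_treeBoundary_eq_zero h (Sym2.mem_mk_left u₁ u₂)
  have h₂ := mem_iff_of_card_treeBoundary_eq_zero h (Sym2.mem_mk_right u₁ u₂)
  by_cases hin : Sum.inl u₁ ∈ Ω
  · have hend : endCount Ω ⟨s(u₁, u₂), he⟩ = 2 := by
      rw [endCount, card_eq_two]
      refine ⟨u₁, u₂, hne, ?_⟩
      ext v
      simp only [baseFinset, mem_filter, mem_univ, true_and, Sym2.mem_iff, mem_insert,
        mem_singleton]
      constructor
      · exact fun h => h.2
      · rintro (rfl | rfl)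
        · exact ⟨hin, Or.inl rfl⟩
        · exact ⟨(h₂ root).mp ((h₁ root).mpr hin), Or.inr rfl⟩
    have := treeCount_le Ω ⟨s(u₁, u₂), he⟩
    rw [hend]
    omega
  · have hend : endCount Ω ⟨s(u₁, u₂), he⟩ = 0 := by
      simp only [endCount, baseFinset, card_eq_zero, filter_eq_empty_iff, mem_filter, mem_univ,
        true_and, Sym2.mem_iff]
      rintro v hv (rfl | rfl)
      · exact hin hv
      · exact hin ((h₁ root).mp ((h₂ root).mpr hv))
    have htree : treeCount Ω ⟨s(u₁, u₂), he⟩ = 0 := by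
      simp only [treeCount, card_eq_zero, filter_eq_empty_iff, mem_univ, true_implies]
      exact fun j hj => hin ((h₁ j).mp hj)
    rw [hend, htree]
    omega


variable (Ω) in
def goodEdges : Finset G.edgeSet :=
  {e | treeCount Ω e ≤ k * (endCount Ω e + #(treeBoundary Ω e))}

lemma treeCount_le_two_mul_of_notMem_goodEdges (hk : 1 ≤ k) {e : G.edgeSet}
    (he : e ∉ goodEdges Ω) : treeCount Ω e ≤ 2 * k * #(treeBoundary Ω e) := by
  have hd : #(treeBoundary Ω e) ≠ 0 := fun hd => he <| by
    simpa [goodEdges, hd] using (treeCount_le_and_endCount_ne_one hk hd).1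
  calc treeCount Ω e ≤ 2 * k * 1 := by simpa using treeCount_le Ω e
    _ ≤ 2 * k * #(treeBoundary Ω e) := Nat.mul_le_mul_left _ (Nat.one_le_iff_ne_zero.mpr hd)

lemma mem_goodEdges_and_one_le_of_endCount_eq_one (hk : 1 ≤ k) {e : G.edgeSet}
    (ht : endCount Ω e = 1) : e ∈ goodEdges Ω ∧ 1 ≤ #(treeBoundary Ω e) := by
  have hd : 1 ≤ #(treeBoundary Ω e) :=
    Nat.one_le_iff_ne_zero.mpr fun hd => (treeCount_le_and_endCount_ne_one hk hd).2 ht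
  refine ⟨mem_filter.mpr ⟨mem_univ _, ?_⟩, hd⟩
  calc treeCount Ω e ≤ k * 2 := by simpa [mul_comm] using treeCount_le Ω e
    _ ≤ k * (endCount Ω e + #(treeBoundary Ω e)) := Nat.mul_le_mul_left _ (by omega)

variable (Ω) in
lemma sum_treeCount_compl_goodEdges_le (hk : 1 ≤ k) :
    ∑ e ∈ (goodEdges Ω)ᶜ, treeCount Ω e ≤ 2 * k * ∑ e ∈ (goodEdges Ω)ᶜ, #(treeBoundary Ω e) := by
  rw [mul_sum]
  exact sum_le_sum fun e he => treeCount_le_two_mul_of_notMem_goodEdges hk (mem_compl.mp he)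

variable (Ω) in
lemma sum_treeCount_goodEdges_le (hdeg : ∀ v, G.degree v ≤ 3) :
    ∑ e ∈ goodEdges Ω, treeCount Ω e ≤
      3 * k * #(baseFinset Ω) + k * ∑ e ∈ goodEdges Ω, #(treeBoundary Ω e) := by
  have hend : ∑ e ∈ goodEdges Ω, endCount Ω e ≤ 3 * #(baseFinset Ω) := calc
    ∑ e ∈ goodEdges Ω, endCount Ω e ≤ ∑ e, endCount Ω e := sum_le_sum_of_subset (subset_univ _)
    _ = ∑ v ∈ baseFinset Ω, G.degree v := sum_endCount Ω
    _ ≤ ∑ v ∈ baseFinset Ω, 3 := sum_le_sum fun v _ => hdeg v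
    _ = 3 * #(baseFinset Ω) := by rw [sum_const, smul_eq_mul, mul_comm]
  calc ∑ e ∈ goodEdges Ω, treeCount Ω e
      ≤ ∑ e ∈ goodEdges Ω, k * (endCount Ω e + #(treeBoundary Ω e)) :=
        sum_le_sum fun e he => (mem_filter.mp he).2
    _ = k * ∑ e ∈ goodEdges Ω, endCount Ω e + k * ∑ e ∈ goodEdges Ω, #(treeBoundary Ω e) := by
        rw [← mul_sum, sum_add_distrib, mul_add]
    _ ≤ 3 * k * #(baseFinset Ω) + k * ∑ e ∈ goodEdges Ω, #(treeBoundary Ω e) := by nlinarith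

variable (Ω) in
lemma cheeger_mul_card_baseFinset_le (hk : 1 ≤ k)
    (hA : 2 * (Sum.inl ⁻¹' Ω).ncard ≤ Nat.card V) :
    cheeger G * #(baseFinset Ω) ≤ ∑ e ∈ goodEdges Ω, #(treeBoundary Ω e) := by
  have hones := fun e (he : e ∈ ({e | endCount Ω e = 1} : Finset G.edgeSet)) =>
    mem_goodEdges_and_one_le_of_endCount_eq_one hk (mem_filter.mp he).2
  have hcount : #{e | endCount Ω e = 1} ≤ ∑ e ∈ goodEdges Ω, #(treeBoundary Ω e) := calc
    #{e | endCount Ω e = 1} ≤ ∑ e with endCount Ω e = 1, #(treeBoundary Ω e) := by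
        simpa using card_nsmul_le_sum _ _ 1 fun e he => (hones e he).2
    _ ≤ ∑ e ∈ goodEdges Ω, #(treeBoundary Ω e) :=
        sum_le_sum_of_subset fun e he => (hones e he).1
  calc cheeger G * #(baseFinset Ω) = cheeger G * (Sum.inl ⁻¹' Ω).ncard := by
        rw [ncard_preimage_inl]
    _ ≤ ebdry G (Sum.inl ⁻¹' Ω) := cheeger_mul_ncard_le G hA
    _ ≤ ∑ e ∈ goodEdges Ω, #(treeBoundary Ω e) := by
        exact_mod_cast (ebdry_preimage_inl_le Ω).trans hcount

variable (Ω) in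
theorem plant_mul_ncard_le_of_base (hdeg : ∀ v, G.degree v ≤ 3) (hk : 1 ≤ k)
    (hA : 2 * (Sum.inl ⁻¹' Ω).ncard ≤ Nat.card V) :
    min (1 / (2 * (k : ℝ))) (cheeger G / (3 * k + 1 + k * cheeger G)) * Ω.ncard ≤
      ebdry (plant G k) Ω := by
  have hsize : Ω.ncard = #(baseFinset Ω) + (∑ e ∈ (goodEdges Ω)ᶜ, treeCount Ω e +
      ∑ e ∈ goodEdges Ω, treeCount Ω e) := by
    rw [ncard_eq_card_baseFinset_add_sum_treeCount, add_comm (∑ e ∈ _ᶜ, _), sum_add_sum_compl]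
  have hbdry : ∑ e ∈ (goodEdges Ω)ᶜ, #(treeBoundary Ω e) +
      ∑ e ∈ goodEdges Ω, #(treeBoundary Ω e) ≤ ebdry (plant G k) Ω := by
    rw [add_comm, sum_add_sum_compl]
    exact sum_card_treeBoundary_le Ω
  have hP := sum_treeCount_compl_goodEdges_le Ω hk
  have hQ := sum_treeCount_goodEdges_le Ω hdeg
  have hac := cheeger_mul_card_baseFinset_le Ω hk hA
  generalize ∑ e ∈ (goodEdges Ω)ᶜ, treeCount Ω e = P at hsize hP
  generalize ∑ e ∈ goodEdges Ω, treeCount Ω e = Q at hsize hQ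
  generalize ∑ e ∈ (goodEdges Ω)ᶜ, #(treeBoundary Ω e) = b at hbdry hP
  generalize ∑ e ∈ goodEdges Ω, #(treeBoundary Ω e) = c at hbdry hQ hac
  rw [hsize, Nat.cast_add, Nat.cast_add, ← add_assoc]
  refine (min_mul_add_le (k := k) (b := b) (c := c) (by exact_mod_cast hk) (cheeger_nonneg G)
    (Nat.cast_nonneg _) (Nat.cast_nonneg _) (Nat.cast_nonneg _) (by exact_mod_cast hP)
    (by exact_mod_cast hQ) hac).trans ?_
  exact_mod_cast hbdry

theorem plant_mul_ncard_le (hdeg : ∀ v, G.degree v ≤ 3) (hk : 1 ≤ k)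
    (hΩ : 2 * Ω.ncard ≤ Nat.card (V ⊕ (G.edgeSet × Fin (2 * k)))) :
    min (1 / (2 * (k : ℝ))) (cheeger G / (3 * k + 1 + k * cheeger G)) * Ω.ncard ≤
      ebdry (plant G k) Ω := by
  rcases le_total (2 * (Sum.inl ⁻¹' Ω).ncard) (Nat.card V) with hA | hA
  · exact plant_mul_ncard_le_of_base Ω hdeg hk hA
  have hAc : 2 * (Sum.inl ⁻¹' Ωᶜ).ncard ≤ Nat.card V := by
    have := Set.ncard_add_ncard_compl (Sum.inl ⁻¹' Ω)
    rw [Set.preimage_compl]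
    omega
  have hle : Ω.ncard ≤ Ωᶜ.ncard := by
    have := Set.ncard_add_ncard_compl Ω
    omega
  have hm : 0 ≤ min (1 / (2 * (k : ℝ))) (cheeger G / (3 * k + 1 + k * cheeger G)) := by
    positivity [cheeger_nonneg G]
  calc _ ≤ min (1 / (2 * (k : ℝ))) (cheeger G / (3 * k + 1 + k * cheeger G)) * Ωᶜ.ncard := by
        gcongr
    _ ≤ ebdry (plant G k) Ωᶜ := plant_mul_ncard_le_of_base Ωᶜ hdeg hk hAc
    _ = ebdry (plant G k) Ω := by rw [ebdry_compl]

end Plant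

theorem stmt14_general {V : Type*} [Finite V] (G : SimpleGraph V)
    (hreg : ∀ v, degN G v = 3) (k : ℕ) (hk : 1 ≤ k) :
    min (1 / (2 * (k : ℝ))) (cheeger G / (3 * (k : ℝ) + 1 + (k : ℝ) * cheeger G)) ≤
      cheeger (plant G k) := by
  classical
  cases nonempty_fintype V
  rcases le_or_gt (Nat.card V) 1 with hV | hV
  · rw [cheeger_eq_zero_of_card_le_one G hV, zero_div, min_eq_right (by positivity)]
    exact cheeger_nonneg _
  refine le_cheeger _ (by rw [Nat.card_sum]; omega) fun _ hΩ => plant_mul_ncard_le ?_ hk hΩ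
  exact fun v => (degN_eq_degree G v ▸ hreg v).le

/-- For a finite connected 3-regular graph `G`, the Cheeger constant of the planted graph
`G_k` satisfies `h(G_k) ≥ min{1/(2k), h(G)/(3k + 1 + k h(G))}`. -/
theorem stmt14 {V : Type*} [Finite V] (G : SimpleGraph V) (hconn : G.Connected)
    (hreg : ∀ v, degN G v = 3) (k : ℕ) (hk : 1 ≤ k) :
    min (1 / (2 * (k : ℝ))) (cheeger G / (3 * (k : ℝ) + 1 + (k : ℝ) * cheeger G)) ≤
      cheeger (plant G k) :=
  stmt14_general G hreg k hk
end
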